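/- Let m be a positive integer and m' > 0; let Y and X be independent random variables with unit-mean Gamma densities f_G(·, m) and f_G(·, m') respectively, and define O(α) = P{Y < α X} for α > 0. Then the function R : (0, ∞) → ℝ, R(η) = ∫₀^∞ (1 − O(η γ))/(1 + γ) dγ, is finite and strictly decreasing on (0, ∞). -/

import Mathlib

/-!
Since `X > 0` almost surely, the events `{Y < α X}` increase with `α`. For `0 < α < c < β` the
event `{c < Y < β, 1 < X < c / α}` lies in `{α X < Y < β X}`, and by independence its
probability is a product of Gamma probabilities of intervals in `(0, ∞)`, hence positive. So `O`
is strictly increasing on `(0, ∞)`, and `R` strictly decreasing once the integrals are finite.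

For finiteness, `1 - O(α) = P{α X ≤ Y} ≤ P{X ≤ t} + P{α t ≤ Y}`. Near `0` the density of `X` is
at most a multiple of `x ^ (m' - 1)`, so `P{X ≤ t} = O(t ^ m')`, while Markov's inequality and
`E Y = 1` give `P{u ≤ Y} ≤ 1 / u`. Taking `t = α ^ (-1 / (m' + 1))` yields
`1 - O(α) = O(α ^ (-m' / (m' + 1)))`, which is integrable against `dγ / (1 + γ)` at infinity.
-/

open MeasureTheory ProbabilityTheory Real Set

/-- Unit-mean Nakagami-m (Gamma) density with shape parameter `s`. -/
noncomputable def fG (s x : ℝ) : ℝ :=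
  if 0 < x then s ^ s * x ^ (s - 1) * Real.exp (-s * x) / Real.Gamma s else 0

lemma integrableOn_Ioi_div_one_add {f : ℝ → ℝ} (hf : Measurable f) (hf0 : ∀ x, 0 ≤ f x)
    (hf1 : ∀ x, f x ≤ 1) {C q : ℝ} (hq : 0 < q)
    (hdecay : ∀ x, 1 < x → f x ≤ C * x ^ (-q)) :
    IntegrableOn (fun x => f x / (1 + x)) (Ioi 0) := by
  have hmeas : AEStronglyMeasurable (fun x => f x / (1 + x)) volume :=
    (by fun_prop : Measurable fun x => f x / (1 + x)).aestronglyMeasurable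
  have hnorm : ∀ x, 0 < x → ‖f x / (1 + x)‖ = f x / (1 + x) := fun x hx =>
    Real.norm_of_nonneg (div_nonneg (hf0 x) (by linarith))
  have hnear : IntegrableOn (fun x => f x / (1 + x)) (Ioc 0 1) := by
    refine Integrable.mono' (integrableOn_const (C := (1 : ℝ)) measure_Ioc_lt_top.ne)
      hmeas.restrict ?_
    filter_upwards [ae_restrict_mem measurableSet_Ioc] with x hx
    rw [hnorm x hx.1, div_le_one (by linarith [hx.1])]
    linarith [hf1 x, hx.1]
  have hfar : IntegrableOn (fun x => f x / (1 + x)) (Ioi 1) := by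
    refine Integrable.mono'
      ((integrableOn_Ioi_rpow_of_lt (by linarith : -q - 1 < -1) one_pos).const_mul C)
      hmeas.restrict ?_
    filter_upwards [ae_restrict_mem measurableSet_Ioi] with x (hx : 1 < x)
    have hx0 : 0 < x := one_pos.trans hx
    calc ‖f x / (1 + x)‖ = f x / (1 + x) := hnorm x hx0
      _ ≤ f x / x := div_le_div_of_nonneg_left (hf0 x) hx0 (by linarith)
      _ ≤ C * x ^ (-q) / x := by gcongr; exact hdecay x hx
      _ = C * x ^ (-q - 1) := by rw [rpow_sub_one hx0.ne', mul_div_assoc]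
  simpa [Ioc_union_Ioi_eq_Ioi zero_le_one] using hnear.union hfar

lemma setIntegral_lt_setIntegral_of_forall_lt {α : Type*} [MeasurableSpace α] {μ : Measure α}
    {s : Set α} {f g : α → ℝ} (hs : MeasurableSet s) (hμs : μ s ≠ 0)
    (hf : IntegrableOn f s μ) (hg : IntegrableOn g s μ) (hlt : ∀ x ∈ s, f x < g x) :
    ∫ x in s, f x ∂μ < ∫ x in s, g x ∂μ := by
  have hpos : ∀ x ∈ s, 0 < (g - f) x := fun x hx => sub_pos.2 (hlt x hx)
  rw [← sub_pos, ← integral_sub hg hf]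
  change 0 < ∫ x in s, (g - f) x ∂μ
  rw [integral_pos_iff_support_of_nonneg_ae ?_ (hg.sub hf), Measure.restrict_apply' hs,
    inter_eq_right.2 fun x hx => Function.mem_support.2 (hpos x hx).ne']
  · exact pos_iff_ne_zero.2 hμs
  · filter_upwards [ae_restrict_mem hs] with x hx
    exact (hpos x hx).le

section Density

variable {s : ℝ}

lemma fG_of_nonpos {x : ℝ} (hx : x ≤ 0) : fG s x = 0 := if_neg hx.not_gt

lemma fG_pos (hs : 0 < s) {x : ℝ} (hx : 0 < x) : 0 < fG s x := by
  rw [fG, if_pos hx]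
  have := Gamma_pos_of_pos hs
  positivity

lemma fG_nonneg (hs : 0 < s) (x : ℝ) : 0 ≤ fG s x := by
  rcases le_or_gt x 0 with hx | hx
  · exact (fG_of_nonpos hx).ge
  · exact (fG_pos hs hx).le

@[fun_prop]
lemma measurable_fG (s : ℝ) : Measurable (fG s) :=
  Measurable.ite measurableSet_Ioi (by fun_prop) measurable_const

lemma fG_le_rpow (hs : 0 < s) {x : ℝ} (hx : 0 < x) :
    fG s x ≤ s ^ s / Gamma s * x ^ (s - 1) := by
  have := Gamma_pos_of_pos hs
  rw [fG, if_pos hx, div_mul_eq_mul_div]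
  gcongr ?_ / _
  exact mul_le_of_le_one_right (by positivity) (exp_le_one_iff.2 (by nlinarith))

end Density

noncomputable def fGMeasure (s : ℝ) : Measure ℝ :=
  volume.withDensity fun x => ENNReal.ofReal (fG s x)

section Law

variable {s : ℝ}

lemma fGMeasure_eq_zero_iff (hs : 0 < s) {A : Set ℝ} :
    fGMeasure s A = 0 ↔ volume (Ioi 0 ∩ A) = 0 := by
  have hsupp : {x | ENNReal.ofReal (fG s x) ≠ 0} = Ioi 0 := by
    ext x
    simp only [mem_ofPred_eq, ne_eq, ENNReal.ofReal_eq_zero, not_le, mem_Ioi]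
    exact ⟨fun h => lt_of_not_ge fun hx => h.ne' (fG_of_nonpos hx), fG_pos hs⟩
  rw [fGMeasure, withDensity_apply_eq_zero' (by fun_prop), hsupp]

lemma fGMeasure_Iic_zero (hs : 0 < s) : fGMeasure s (Iic 0) = 0 := by
  rw [fGMeasure_eq_zero_iff hs, Ioi_inter_Iic, Ioc_self, measure_empty]

lemma fGMeasure_Ioo_ne_zero (hs : 0 < s) {a b : ℝ} (ha : 0 ≤ a) (hab : a < b) :
    fGMeasure s (Ioo a b) ≠ 0 := by
  rw [Ne, fGMeasure_eq_zero_iff hs,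
    inter_eq_right.2 (Ioo_subset_Ioi_self.trans (Ioi_subset_Ioi ha)), Real.volume_Ioo,
    ENNReal.ofReal_eq_zero, not_le, sub_pos]
  exact hab

lemma fGMeasure_Iic_le (hs : 0 < s) {t : ℝ} (ht : 0 ≤ t) :
    fGMeasure s (Iic t) ≤ ENNReal.ofReal (s ^ s / Gamma (s + 1) * t ^ s) := by
  have hΓ := Gamma_pos_of_pos hs
  have hint : IntegrableOn (fun x => s ^ s / Gamma s * x ^ (s - 1)) (Ioc 0 t) :=
    ((intervalIntegral.intervalIntegrable_rpow' (by linarith)).1).const_mul _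
  calc fGMeasure s (Iic t) ≤ fGMeasure s (Iic 0) + fGMeasure s (Ioc 0 t) := by
        rw [← Iic_union_Ioc_eq_Iic ht]; exact measure_union_le _ _
    _ = ∫⁻ x in Ioc 0 t, ENNReal.ofReal (fG s x) := by
        rw [fGMeasure_Iic_zero hs, zero_add, fGMeasure, withDensity_apply _ measurableSet_Ioc]
    _ ≤ ∫⁻ x in Ioc 0 t, ENNReal.ofReal (s ^ s / Gamma s * x ^ (s - 1)) :=
        setLIntegral_mono (by fun_prop) fun x hx => ENNReal.ofReal_le_ofReal (fG_le_rpow hs hx.1)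
    _ = ENNReal.ofReal (∫ x in Ioc 0 t, s ^ s / Gamma s * x ^ (s - 1)) := by
        refine (ofReal_integral_eq_lintegral_ofReal hint ?_).symm
        filter_upwards [ae_restrict_mem measurableSet_Ioc] with x hx
        exact mul_nonneg (by positivity) (rpow_nonneg hx.1.le _)
    _ = ENNReal.ofReal (s ^ s / Gamma (s + 1) * t ^ s) := by
        rw [← intervalIntegral.integral_of_le ht, intervalIntegral.integral_const_mul,
          integral_rpow (Or.inl (by linarith)), sub_add_cancel, zero_rpow hs.ne', sub_zero,
          Gamma_add_one hs.ne']
        field_simp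

lemma integral_fG_mul_id (hs : 0 < s) : ∫ x, fG s x * x = 1 := by
  have hΓ := Gamma_pos_of_pos hs
  rw [← setIntegral_eq_integral_of_forall_compl_eq_zero (s := Ioi 0)
    fun x hx => by rw [fG_of_nonpos (not_lt.1 hx), zero_mul]]
  rw [setIntegral_congr_fun measurableSet_Ioi (g := fun x =>
    s ^ s / Gamma s * (x ^ (s + 1 - 1) * exp (-(s * x)))) fun x (hx : 0 < x) => by
      rw [fG, if_pos hx, add_sub_cancel_right, rpow_sub_one hx.ne']
      field_simp]
  rw [integral_const_mul, integral_rpow_mul_exp_neg_mul_Ioi (by linarith) hs, Gamma_add_one hs.ne',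
    div_rpow zero_le_one hs.le, one_rpow, rpow_add_one hs.ne']
  field_simp

lemma lintegral_ofReal_id_fGMeasure (hs : 0 < s) :
    ∫⁻ x, ENNReal.ofReal x ∂fGMeasure s = 1 := by
  have hnonneg : ∀ x, 0 ≤ fG s x * x := fun x => by
    rcases le_or_gt x 0 with hx | hx
    · rw [fG_of_nonpos hx, zero_mul]
    · exact mul_nonneg (fG_nonneg hs x) hx.le
  rw [← ENNReal.toReal_eq_one_iff, ← integral_fG_mul_id hs,
    integral_eq_lintegral_of_nonneg_ae (ae_of_all _ hnonneg) (by fun_prop), fGMeasure,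
    lintegral_withDensity_eq_lintegral_mul₀ (by fun_prop) (by fun_prop)]
  simp only [Pi.mul_apply, ENNReal.ofReal_mul (fG_nonneg hs _)]

lemma fGMeasure_Ici_le (hs : 0 < s) {u : ℝ} (hu : 0 < u) :
    fGMeasure s (Ici u) ≤ ENNReal.ofReal (1 / u) :=
  calc fGMeasure s (Ici u) ≤ fGMeasure s {x | ENNReal.ofReal u ≤ ENNReal.ofReal x} :=
        measure_mono fun x hx => ENNReal.ofReal_le_ofReal hx
    _ ≤ (∫⁻ x, ENNReal.ofReal x ∂fGMeasure s) / ENNReal.ofReal u :=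
        meas_ge_le_lintegral_div (by fun_prop) (by simpa using hu) ENNReal.ofReal_ne_top
    _ = ENNReal.ofReal (1 / u) := by
        rw [lintegral_ofReal_id_fGMeasure hs, ENNReal.ofReal_div_of_pos hu, ENNReal.ofReal_one]

end Law

section RandomVariable

variable {Ω : Type*} [MeasurableSpace Ω] {P : Measure Ω} {X : Ω → ℝ} {s : ℝ}

lemma ae_pos_of_map_eq_fGMeasure (hX : Measurable X) (hs : 0 < s) (hlaw : P.map X = fGMeasure s) :
    ∀ᵐ ω ∂P, 0 < X ω := by
  rw [ae_iff]
  simp_rw [not_lt]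
  change P (X ⁻¹' Iic 0) = 0
  rw [← Measure.map_apply hX measurableSet_Iic, hlaw]
  exact fGMeasure_Iic_zero hs

lemma measure_preimage_Ioo_ne_zero_of_map_eq_fGMeasure (hX : Measurable X) (hs : 0 < s)
    (hlaw : P.map X = fGMeasure s) {a b : ℝ} (ha : 0 ≤ a) (hab : a < b) :
    P (X ⁻¹' Ioo a b) ≠ 0 := by
  rw [← Measure.map_apply hX measurableSet_Ioo, hlaw]
  exact fGMeasure_Ioo_ne_zero hs ha hab

lemma measureReal_preimage_Iic_le_of_map_eq_fGMeasure (hX : Measurable X) (hs : 0 < s)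
    (hlaw : P.map X = fGMeasure s) {t : ℝ} (ht : 0 ≤ t) :
    P.real (X ⁻¹' Iic t) ≤ s ^ s / Gamma (s + 1) * t ^ s := by
  have hΓ := Gamma_pos_of_pos (by linarith : 0 < s + 1)
  refine ENNReal.toReal_le_of_le_ofReal (by positivity) ?_
  rw [← Measure.map_apply hX measurableSet_Iic, hlaw]
  exact fGMeasure_Iic_le hs ht

lemma measureReal_preimage_Ici_le_of_map_eq_fGMeasure (hX : Measurable X) (hs : 0 < s)
    (hlaw : P.map X = fGMeasure s) {u : ℝ} (hu : 0 < u) :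
    P.real (X ⁻¹' Ici u) ≤ 1 / u := by
  refine ENNReal.toReal_le_of_le_ofReal (by positivity) ?_
  rw [← Measure.map_apply hX measurableSet_Ici, hlaw]
  exact fGMeasure_Ici_le hs hu

end RandomVariable

/-- The paper's outage probability `O(α) = P{Y < α X}`. -/
noncomputable def outage {Ω : Type*} [MeasurableSpace Ω] (P : Measure Ω) (X Y : Ω → ℝ)
    (α : ℝ) : ℝ :=
  P.real {ω | Y ω < α * X ω}

section Outage

variable {Ω : Type*} [MeasurableSpace Ω] {P : Measure Ω} {X Y : Ω → ℝ}

lemma setOf_lt_mul_ae_le (hXpos : ∀ᵐ ω ∂P, 0 < X ω) {α β : ℝ} (hαβ : α ≤ β) :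
    {ω | Y ω < α * X ω} ≤ᵐ[P] {ω | Y ω < β * X ω} :=
  hXpos.mono fun ω hω (h : Y ω < α * X ω) =>
    h.trans_le (mul_le_mul_of_nonneg_right hαβ hω.le)

lemma monotone_outage [IsFiniteMeasure P] (hXpos : ∀ᵐ ω ∂P, 0 < X ω) :
    Monotone (outage P X Y) := fun _ _ hαβ =>
  ENNReal.toReal_mono (measure_ne_top _ _) (measure_mono_ae (setOf_lt_mul_ae_le hXpos hαβ))

lemma strictMonoOn_outage [IsFiniteMeasure P] (hX : Measurable X) (hY : Measurable Y)
    (hindep : IndepFun Y X P) (hXpos : ∀ᵐ ω ∂P, 0 < X ω)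
    (hXsupp : ∀ a b, 0 ≤ a → a < b → P (X ⁻¹' Ioo a b) ≠ 0)
    (hYsupp : ∀ a b, 0 ≤ a → a < b → P (Y ⁻¹' Ioo a b) ≠ 0) :
    StrictMonoOn (outage P X Y) (Ioi 0) := by
  intro α (hα : 0 < α) β _ hαβ
  obtain ⟨c, hαc, hcβ⟩ := exists_between hαβ
  set G := Y ⁻¹' Ioo c β ∩ X ⁻¹' Ioo 1 (c / α)
  have hG : ∀ ω ∈ G, α * X ω < Y ω ∧ Y ω < β * X ω := by
    rintro ω ⟨⟨hcY, hYβ⟩, h1X, hXc⟩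
    constructor
    · calc α * X ω < α * (c / α) := by gcongr
        _ = c := mul_div_cancel₀ _ hα.ne'
        _ < Y ω := hcY
    · calc Y ω < β := hYβ
        _ < β * X ω := lt_mul_of_one_lt_right (hα.trans hαβ) h1X
  have hGpos : 0 < P.real G := by
    refine ENNReal.toReal_pos ?_ (measure_ne_top _ _)
    rw [hindep.measure_inter_preimage_eq_mul _ _ measurableSet_Ioo measurableSet_Ioo]
    exact mul_ne_zero (hYsupp _ _ (hα.trans hαc).le hcβ)
      (hXsupp _ _ zero_le_one ((one_lt_div hα).2 hαc))
  have hdisj : Disjoint {ω | Y ω < α * X ω} G :=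
    disjoint_left.2 fun ω (h : Y ω < α * X ω) hω => (hG ω hω).1.not_gt h
  calc outage P X Y α < P.real {ω | Y ω < α * X ω} + P.real G := lt_add_of_pos_right _ hGpos
    _ = P.real ({ω | Y ω < α * X ω} ∪ G) :=
        (measureReal_union hdisj ((hY measurableSet_Ioo).inter (hX measurableSet_Ioo))).symm
    _ ≤ outage P X Y β := by
        refine ENNReal.toReal_mono (measure_ne_top _ _) (measure_mono_ae ?_)
        filter_upwards [setOf_lt_mul_ae_le hXpos hαβ.le] with ω hω
        rintro (h | h)
        exacts [hω h, (hG ω h).2]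

lemma one_sub_outage_le [IsProbabilityMeasure P] (hX : Measurable X) (hY : Measurable Y)
    {a b p : ℝ} (hp : 0 < p) (hXtail : ∀ t, 0 < t → P.real (X ⁻¹' Iic t) ≤ a * t ^ p)
    (hYtail : ∀ u, 0 < u → P.real (Y ⁻¹' Ici u) ≤ b / u) {α : ℝ} (hα : 0 < α) :
    1 - outage P X Y α ≤ (a + b) * α ^ (-(p / (p + 1))) := by
  set t := α ^ (-(1 / (p + 1)))
  have ht : 0 < t := rpow_pos_of_pos hα _
  have hsub : {ω | Y ω < α * X ω}ᶜ ⊆ X ⁻¹' Iic t ∪ Y ⁻¹' Ici (α * t) := by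
    intro ω hω
    by_contra! h
    simp only [mem_union, mem_preimage, mem_Iic, mem_Ici, not_or, not_le] at h
    exact hω (h.2.trans (mul_lt_mul_of_pos_left h.1 hα))
  -- this choice of `t` makes both tail bounds equal to `α ^ (-(p / (p + 1)))`
  have htp : t ^ p = α ^ (-(p / (p + 1))) := by
    rw [← rpow_mul hα.le]; ring_nf
  have hαt : 1 / (α * t) = α ^ (-(p / (p + 1))) := by
    rw [show -(p / (p + 1)) = -(1 + -(1 / (p + 1))) by field_simp; ring, rpow_neg hα.le,
      rpow_add hα, rpow_one, one_div]
  calc 1 - outage P X Y α = P.real {ω | Y ω < α * X ω}ᶜ :=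
        (probReal_compl_eq_one_sub (measurableSet_lt hY (hX.const_mul α))).symm
    _ ≤ P.real (X ⁻¹' Iic t) + P.real (Y ⁻¹' Ici (α * t)) :=
        (measureReal_mono hsub).trans (measureReal_union_le _ _)
    _ ≤ a * t ^ p + b / (α * t) := add_le_add (hXtail t ht) (hYtail _ (mul_pos hα ht))
    _ = (a + b) * α ^ (-(p / (p + 1))) := by rw [htp, div_eq_mul_one_div b, hαt]; ring

lemma integrableOn_one_sub_outage_div_one_add [IsProbabilityMeasure P] (hX : Measurable X)
    (hY : Measurable Y) (hXpos : ∀ᵐ ω ∂P, 0 < X ω) {a b p : ℝ} (hp : 0 < p)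
    (hXtail : ∀ t, 0 < t → P.real (X ⁻¹' Iic t) ≤ a * t ^ p)
    (hYtail : ∀ u, 0 < u → P.real (Y ⁻¹' Ici u) ≤ b / u) {η : ℝ} (hη : 0 < η) :
    IntegrableOn (fun γ => (1 - outage P X Y (η * γ)) / (1 + γ)) (Ioi 0) :=
  integrableOn_Ioi_div_one_add (C := (a + b) * η ^ (-(p / (p + 1)))) (q := p / (p + 1))
    (((monotone_outage hXpos).measurable.comp (measurable_const_mul η)).const_sub 1)
    (fun _ => sub_nonneg.2 measureReal_le_one) (fun _ => sub_le_self _ measureReal_nonneg)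
    (div_pos hp (by linarith)) fun γ hγ =>
      (one_sub_outage_le hX hY hp hXtail hYtail (by positivity)).trans_eq <| by
        rw [mul_rpow hη.le (by linarith)]; ring

end Outage

/-- Theorem 2 (proof step): with `Y, X` independent unit-mean Gamma variables of shapes
`m` (positive integer) and `m' > 0`, and `O(α) = P{Y < αX}`, the function
`R(η) = ∫₀^∞ (1 − O(ηγ))/(1+γ) dγ` is finite and strictly decreasing on `(0, ∞)`. -/
theorem capacity_strict_anti
    {Ω : Type*} [MeasurableSpace Ω] (P : Measure Ω) [IsProbabilityMeasure P]
    (m : ℕ) (hm : 0 < m) (m' : ℝ) (hm' : 0 < m')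
    (X Y : Ω → ℝ) (hX : Measurable X) (hY : Measurable Y)
    (hindep : IndepFun Y X P)
    (hYlaw : P.map Y = volume.withDensity (fun x => ENNReal.ofReal (fG (m : ℝ) x)))
    (hXlaw : P.map X = volume.withDensity (fun x => ENNReal.ofReal (fG m' x)))
    (O : ℝ → ℝ) (hO : ∀ α, O α = (P {ω | Y ω < α * X ω}).toReal)
    (R : ℝ → ℝ)
    (hR : ∀ η, R η = ∫ γ in Set.Ioi (0 : ℝ), (1 - O (η * γ)) / (1 + γ)) :
    (∀ η > 0, IntegrableOn (fun γ => (1 - O (η * γ)) / (1 + γ)) (Set.Ioi (0 : ℝ))) ∧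
      StrictAntiOn R (Set.Ioi 0) := by
  obtain rfl : O = outage P X Y := funext hO
  have hm0 : (0 : ℝ) < m := Nat.cast_pos.2 hm
  have hXpos := ae_pos_of_map_eq_fGMeasure hX hm' hXlaw
  have hint (η : ℝ) (hη : 0 < η) := integrableOn_one_sub_outage_div_one_add hX hY hXpos hm'
    (fun _ ht => measureReal_preimage_Iic_le_of_map_eq_fGMeasure hX hm' hXlaw ht.le)
    (fun _ hu => measureReal_preimage_Ici_le_of_map_eq_fGMeasure hY hm0 hYlaw hu) hη
  have hstrict := strictMonoOn_outage hX hY hindep hXpos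
    (fun _ _ => measure_preimage_Ioo_ne_zero_of_map_eq_fGMeasure hX hm' hXlaw)
    (fun _ _ => measure_preimage_Ioo_ne_zero_of_map_eq_fGMeasure hY hm0 hYlaw)
  refine ⟨hint, fun η₁ h₁ η₂ h₂ hlt => ?_⟩
  rw [hR, hR]
  refine setIntegral_lt_setIntegral_of_forall_lt measurableSet_Ioi (by simp) (hint η₂ h₂)
    (hint η₁ h₁) fun γ (hγ : 0 < γ) => ?_
  gcongr
  exact hstrict (mul_pos h₁ hγ) (mul_pos h₂ hγ) (by gcongr)
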